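/- arXiv:2405.17662 — 4 statements merged into one kernel-verified Lean document; each statement's English description precedes it below -/
import Mathlib

section
/- Let w ∈ ℝ and let U : ℝ → Matrix (Fin 2) (Fin 2) ℂ be continuous such that x ↦ ‖U(x) + i·w·σ₃‖ is integrable on ℝ. Suppose v : ℝ → (Fin 2 → ℂ) is continuous and bounded and satisfies, for every x ∈ ℝ, the Volterra integral equation v(x) = e₁ + ∫_{-∞}^{x} exp(i·(1 - σ₃)·w·(x - τ)) · (U(τ) + i·w·σ₃) · v(τ) dτ, where e₁ = ![1, 0] and 1 denotes the 2×2 identity matrix. Then v is differentiable on ℝ with v'(x) = (U(x) + i·w·(identity)) · v(x) for all x, and v(x) → e₁ as x → -∞. -/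
/-!
Write `A = i w (1 - σ₃)` and `f τ = (U τ + i w σ₃) v τ`. Since
`exp ((x - τ) A) = exp (x A) exp (-τ A)`, the integral term is `exp (x A)` applied to a primitive
of `exp (-τ A) f τ`, so by the product rule it has derivative `A (v x - e₁) + f x`, which is
`(U x + i w) v x` because `A e₁ = 0`. As `exp (t A) = diag (1, e^{2iwt})` has norm `1` for real
`t`, all integrands are dominated by `‖U + i w σ₃‖ · sup ‖v‖`, and the integral term tends to `0`
as `x → -∞`.
-/

open Matrix MeasureTheory

attribute [local instance] Matrix.linftyOpNormedAddCommGroup Matrix.linftyOpNormedSpace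
  Matrix.linftyOpNormedRing Matrix.linftyOpNormedAlgebra

noncomputable def σ₃ : Matrix (Fin 2) (Fin 2) ℂ := !![1, 0; 0, -1]

open Set Filter Topology

lemma hasDerivAt_integral_Iic {E : Type*} [NormedAddCommGroup E] [NormedSpace ℝ E]
    [CompleteSpace E] {g : ℝ → E} (hg : Continuous g) (hgi : Integrable g) (x : ℝ) :
    HasDerivAt (fun y => ∫ τ in Iic y, g τ) (g x) x := by
  have hsplit : (fun y => ∫ τ in Iic y, g τ) =
      fun y => (∫ τ in Iic 0, g τ) + ∫ τ in (0 : ℝ)..y, g τ := by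
    funext y
    rw [← intervalIntegral.integral_Iic_sub_Iic hgi.integrableOn hgi.integrableOn, add_sub_cancel]
  rw [hsplit]
  exact (intervalIntegral.integral_hasDerivAt_right hgi.intervalIntegrable
    hg.aestronglyMeasurable.stronglyMeasurableAtFilter hg.continuousAt).const_add _

namespace Matrix

variable {n : Type*} [Fintype n] [DecidableEq n]

noncomputable def mulVecCLM : Matrix n n ℂ →L[ℝ] (n → ℂ) →L[ℝ] n → ℂ :=
  LinearMap.mkContinuous₂ (mulVecBilin ℝ ℝ) 1 fun M u => by
    simpa only [one_mul, mulVecBilin_apply] using linfty_opNorm_mulVec M u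

lemma integral_mulVec {μ : Measure ℝ} (M : Matrix n n ℂ) {g : ℝ → n → ℂ} (hg : Integrable g μ) :
    ∫ τ, M *ᵥ g τ ∂μ = M *ᵥ ∫ τ, g τ ∂μ :=
  (mulVecCLM M).integral_comp_comm hg

lemma exp_smul_add_smul (A : Matrix n n ℂ) (s t : ℝ) :
    NormedSpace.exp ((s + t) • A) = NormedSpace.exp (s • A) * NormedSpace.exp (t • A) := by
  rw [add_smul, exp_add_of_commute _ _ (((Commute.refl A).smul_left s).smul_right t)]

variable {A : Matrix n n ℂ} {K : ℝ} (hA : ∀ t : ℝ, ‖NormedSpace.exp (t • A)‖ ≤ K)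
  {f : ℝ → n → ℂ}
include hA

lemma norm_exp_smul_mulVec_le (t : ℝ) (u : n → ℂ) :
    ‖NormedSpace.exp (t • A) *ᵥ u‖ ≤ K * ‖u‖ :=
  (linfty_opNorm_mulVec _ _).trans (mul_le_mul_of_nonneg_right (hA t) (norm_nonneg u))

lemma integrable_exp_smul_mulVec {φ : ℝ → ℝ} (hφ : Continuous φ) (hf : Continuous f)
    (hfi : Integrable f) : Integrable fun τ => NormedSpace.exp (φ τ • A) *ᵥ f τ :=
  (hfi.norm.const_mul K).mono' ((by fun_prop : Continuous fun τ =>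
      NormedSpace.exp (φ τ • A)).matrix_mulVec hf).aestronglyMeasurable
    (Eventually.of_forall fun τ => norm_exp_smul_mulVec_le hA (φ τ) (f τ))

lemma integral_Iic_exp_sub_smul_mulVec (hf : Continuous f) (hfi : Integrable f) (x : ℝ) :
    ∫ τ in Iic x, NormedSpace.exp ((x - τ) • A) *ᵥ f τ =
      NormedSpace.exp (x • A) *ᵥ ∫ τ in Iic x, NormedSpace.exp ((-τ) • A) *ᵥ f τ := by
  rw [← integral_mulVec _ (integrable_exp_smul_mulVec hA continuous_neg hf hfi).integrableOn]
  simp_rw [mulVec_mulVec, ← exp_smul_add_smul, sub_eq_add_neg]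

lemma hasDerivAt_integral_Iic_exp_sub_smul_mulVec (hf : Continuous f) (hfi : Integrable f)
    (x : ℝ) : HasDerivAt (fun y => ∫ τ in Iic y, NormedSpace.exp ((y - τ) • A) *ᵥ f τ)
      (A *ᵥ (∫ τ in Iic x, NormedSpace.exp ((x - τ) • A) *ᵥ f τ) + f x) x := by
  set G := fun y => ∫ τ in Iic y, NormedSpace.exp ((-τ) • A) *ᵥ f τ
  have hE : HasDerivAt (fun y : ℝ => NormedSpace.exp (y • A)) (A * NormedSpace.exp (x • A)) x :=
    hasDerivAt_exp_smul_const' A x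
  have hG : HasDerivAt G (NormedSpace.exp ((-x) • A) *ᵥ f x) x :=
    hasDerivAt_integral_Iic ((by fun_prop : Continuous fun τ : ℝ =>
      NormedSpace.exp ((-τ) • A)).matrix_mulVec hf)
      (integrable_exp_smul_mulVec hA continuous_neg hf hfi) x
  have hEG : HasDerivAt (fun y => NormedSpace.exp (y • A) *ᵥ G y)
      (NormedSpace.exp (x • A) *ᵥ (NormedSpace.exp ((-x) • A) *ᵥ f x) +
        (A * NormedSpace.exp (x • A)) *ᵥ G x) x :=
    mulVecCLM.hasDerivAt_of_bilinear (fun _ => hE) (fun _ => hG)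
  have hinv : NormedSpace.exp (x • A) * NormedSpace.exp ((-x) • A) = 1 := by
    rw [← exp_smul_add_smul, add_neg_cancel, zero_smul, NormedSpace.exp_zero]
  rw [mulVec_mulVec, hinv, one_mulVec, ← mulVec_mulVec, add_comm] at hEG
  have key := integral_Iic_exp_sub_smul_mulVec hA hf hfi
  rwa [funext key, key]

lemma tendsto_integral_Iic_exp_sub_smul_mulVec_atBot (hfi : Integrable f) :
    Tendsto (fun x => ∫ τ in Iic x, NormedSpace.exp ((x - τ) • A) *ᵥ f τ) atBot (𝓝 0) :=
  squeeze_zero_norm (fun _ => norm_integral_le_of_norm_le (hfi.norm.const_mul K).integrableOn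
      (Eventually.of_forall fun τ => norm_exp_smul_mulVec_le hA _ (f τ)))
    (tendsto_integral_Iic_zero tendsto_id)

end Matrix

lemma exp_smul_one_sub_σ₃ (c : ℂ) :
    NormedSpace.exp (c • ((1 : Matrix (Fin 2) (Fin 2) ℂ) - σ₃)) =
      diagonal ![1, Complex.exp (2 * c)] := by
  have hdiag : c • ((1 : Matrix (Fin 2) (Fin 2) ℂ) - σ₃) = diagonal ![0, 2 * c] := by
    ext i j; fin_cases i <;> fin_cases j <;> simp [σ₃, one_apply, mul_comm, one_add_one_eq_two]
  rw [hdiag, exp_diagonal]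
  congr 1
  ext i; fin_cases i <;> simp [← Complex.exp_eq_exp_ℂ]

lemma norm_exp_smul_I_mul_smul_one_sub_σ₃_le_one (w t : ℝ) :
    ‖NormedSpace.exp (t • (Complex.I * (w : ℂ)) • ((1 : Matrix (Fin 2) (Fin 2) ℂ) - σ₃))‖ ≤ 1 := by
  rw [← smul_assoc, exp_smul_one_sub_σ₃, linfty_opNorm_diagonal,
    pi_norm_le_iff_of_nonneg zero_le_one, Fin.forall_fin_two]
  simp [Complex.norm_exp]

lemma one_sub_σ₃_mulVec_e₁ : ((1 : Matrix (Fin 2) (Fin 2) ℂ) - σ₃) *ᵥ ![1, 0] = 0 := by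
  ext i; fin_cases i <;> simp [σ₃, one_apply]

lemma add_smul_one_mulVec_eq (M : Matrix (Fin 2) (Fin 2) ℂ) (c : ℂ) (u : Fin 2 → ℂ) :
    (M + c • 1) *ᵥ u = (c • (1 - σ₃)) *ᵥ (u - ![1, 0]) + (M + c • σ₃) *ᵥ u := by
  rw [mulVec_sub, smul_mulVec c _ ![1, 0], one_sub_σ₃_mulVec_e₁, smul_zero, sub_zero,
    ← add_mulVec, smul_sub]
  congr 1
  abel

/-- A bounded continuous solution of the Volterra integral equation
`v(x) = e₁ + ∫_{-∞}^{x} e^{i(1-σ₃)w(x-τ)}·(U(τ) + iwσ₃)·v(τ) dτ`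
solves the differential equation `v' = (U + iw·1)·v` and tends to `e₁` as `x → -∞`. -/
theorem volterra_jost_solution (w : ℝ) (U : ℝ → Matrix (Fin 2) (Fin 2) ℂ)
    (hUcont : Continuous U)
    (hUint : Integrable fun x => ‖U x + (Complex.I * (w : ℂ)) • σ₃‖)
    (v : ℝ → Fin 2 → ℂ) (hvcont : Continuous v)
    (hvbdd : ∃ C : ℝ, ∀ x : ℝ, ‖v x‖ ≤ C)
    (hv : ∀ x : ℝ, v x = ![1, 0] + ∫ τ in Set.Iic x,
      (NormedSpace.exp ((Complex.I * (w : ℂ) * ((x : ℂ) - (τ : ℂ))) •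
        ((1 : Matrix (Fin 2) (Fin 2) ℂ) - σ₃))).mulVec
        ((U τ + (Complex.I * (w : ℂ)) • σ₃).mulVec (v τ))) :
    (∀ x : ℝ, HasDerivAt v
      ((U x + (Complex.I * (w : ℂ)) • (1 : Matrix (Fin 2) (Fin 2) ℂ)).mulVec (v x)) x) ∧
    Filter.Tendsto v Filter.atBot (nhds ![1, 0]) := by
  obtain ⟨C, hC⟩ := hvbdd
  set A := (Complex.I * (w : ℂ)) • ((1 : Matrix (Fin 2) (Fin 2) ℂ) - σ₃)
  set f := fun τ => (U τ + (Complex.I * (w : ℂ)) • σ₃) *ᵥ v τ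
  have hA : ∀ t : ℝ, ‖NormedSpace.exp (t • A)‖ ≤ 1 :=
    norm_exp_smul_I_mul_smul_one_sub_σ₃_le_one w
  have hf : Continuous f := (hUcont.add continuous_const).matrix_mulVec hvcont
  have hfi : Integrable f := (hUint.mul_const C).mono' hf.aestronglyMeasurable
    (Eventually.of_forall fun τ => (linfty_opNorm_mulVec _ _).trans
      (mul_le_mul_of_nonneg_left (hC τ) (norm_nonneg _)))
  have hexp : ∀ x τ : ℝ, (Complex.I * (w : ℂ) * ((x : ℂ) - (τ : ℂ))) •
      ((1 : Matrix (Fin 2) (Fin 2) ℂ) - σ₃) = (x - τ) • A := fun x τ => by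
    rw [← smul_assoc, Complex.real_smul, Complex.ofReal_sub, mul_comm]
  have hv' : ∀ x, v x = ![1, 0] + ∫ τ in Iic x, NormedSpace.exp ((x - τ) • A) *ᵥ f τ := by
    simpa only [hexp] using hv
  refine ⟨fun x => ?_, ?_⟩
  · rw [add_smul_one_mulVec_eq, sub_eq_iff_eq_add'.2 (hv' x)]
    exact ((hasDerivAt_integral_Iic_exp_sub_smul_mulVec hA hf hfi x).const_add _)
      |>.congr_of_eventuallyEq (Eventually.of_forall hv')
  · simpa only [add_zero, ← hv'] using
      (tendsto_integral_Iic_exp_sub_smul_mulVec_atBot hA hfi).const_add (![1, 0] : Fin 2 → ℂ)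
end

section
/- Let m : ℝ → ℝ be a nonnegative integrable function and let K : ℝ → ℝ → Matrix (Fin 2) (Fin 2) ℂ be measurable with operator norm ‖K(x, τ)‖ ≤ m(τ) whenever τ ≤ x. Let v : ℕ → ℝ → (Fin 2 → ℂ) satisfy ‖v 0 x‖ ≤ 1 for all x and v (n+1) x = ∫_{-∞}^{x} K(x, τ) · (v n τ) dτ for every n and x. Then for all n ∈ ℕ and x ∈ ℝ, ‖v n x‖ ≤ (∫_{-∞}^{x} m)ⁿ / n!; consequently the series ∑ₙ v n x converges absolutely and uniformly on ℝ, with ‖∑ₙ v n x‖ ≤ exp(∫_ℝ m). -/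
/-!
Write `M x = ∫_{-∞}^x m`. It is absolutely continuous with `M' = m` almost everywhere, so the
fundamental theorem of calculus for absolutely continuous functions gives
`∫_{-∞}^x m M^n = M(x)^(n+1) / (n+1)`. Together with `‖K x τ *ᵥ w‖ ≤ m τ ‖w‖` this is exactly the
induction step of the factorial bound. Since `0 ≤ M ≤ ∫ m`, the iterates are dominated uniformly
by the terms of the exponential series of `∫ m`, and the Weierstrass M-test does the rest.
-/

open Matrix MeasureTheory Set Filter Topology

theorem absolutelyContinuousOnInterval_const {X : Type*} [PseudoMetricSpace X] (c : X) (a b : ℝ) :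
    AbsolutelyContinuousOnInterval (fun _ => c) a b :=
  (LipschitzWith.const c).lipschitzOnWith.absolutelyContinuousOnInterval

theorem AbsolutelyContinuousOnInterval.pow {f : ℝ → ℝ} {a b : ℝ}
    (hf : AbsolutelyContinuousOnInterval f a b) (n : ℕ) :
    AbsolutelyContinuousOnInterval (fun x => f x ^ n) a b := by
  induction n with
  | zero => simpa using absolutelyContinuousOnInterval_const (1 : ℝ) a b
  | succ n ih => simpa only [pow_succ] using ih.fun_mul hf

namespace MeasureTheory.Integrable

section

variable {E : Type*} [NormedAddCommGroup E] [NormedSpace ℝ E] {f : ℝ → E}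

theorem integral_Iic_eq_add_intervalIntegral (hf : Integrable f) (c : ℝ) :
    (fun x => ∫ t in Iic x, f t) = fun x => (∫ t in Iic c, f t) + ∫ t in c..x, f t := by
  ext x
  rw [← intervalIntegral.integral_Iic_sub_Iic hf.integrableOn hf.integrableOn]
  abel

theorem continuous_integral_Iic (hf : Integrable f) : Continuous fun x => ∫ t in Iic x, f t := by
  rw [hf.integral_Iic_eq_add_intervalIntegral 0]
  exact continuous_const.add
    (intervalIntegral.continuous_primitive (fun _ _ => hf.intervalIntegrable) 0)

theorem norm_integral_Iic_le (hf : Integrable f) (x : ℝ) : ‖∫ t in Iic x, f t‖ ≤ ∫ t, ‖f t‖ :=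
  (norm_integral_le_integral_norm _).trans
    (setIntegral_le_integral hf.norm (.of_forall fun _ => norm_nonneg _))

theorem ae_hasDerivAt_integral_Iic [CompleteSpace E] (hf : Integrable f) :
    ∀ᵐ x, HasDerivAt (fun y => ∫ t in Iic y, f t) (f x) x := by
  filter_upwards [LocallyIntegrable.ae_hasDerivAt_integral hf.locallyIntegrable] with x hx
  rw [hf.integral_Iic_eq_add_intervalIntegral 0]
  exact (hx 0).const_add _

end

variable {m : ℝ → ℝ}

theorem absolutelyContinuousOnInterval_integral_Iic (hm : Integrable m) (a b : ℝ) :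
    AbsolutelyContinuousOnInterval (fun x => ∫ t in Iic x, m t) a b := by
  rw [hm.integral_Iic_eq_add_intervalIntegral a]
  exact (absolutelyContinuousOnInterval_const _ a b).fun_add
    (hm.intervalIntegrable.absolutelyContinuousOnInterval_intervalIntegral (by simp))

theorem mul_pow_integral_Iic (hm : Integrable m) (n : ℕ) :
    Integrable fun τ => m τ * (∫ t in Iic τ, m t) ^ n :=
  hm.mul_bdd (hm.continuous_integral_Iic.pow n).aestronglyMeasurable
    (.of_forall fun τ => by
      rw [norm_pow]
      exact pow_le_pow_left₀ (norm_nonneg _) (hm.norm_integral_Iic_le τ) n)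

theorem integral_Iic_mul_pow_integral_Iic (hm : Integrable m) (n : ℕ) (x : ℝ) :
    ∫ τ in Iic x, m τ * (∫ t in Iic τ, m t) ^ n = (∫ t in Iic x, m t) ^ (n + 1) / (n + 1) := by
  set M : ℝ → ℝ := fun y => ∫ t in Iic y, m t
  set G : ℝ → ℝ := fun y => ((n : ℝ) + 1)⁻¹ * M y ^ (n + 1)
  have hG_deriv : ∀ᵐ τ, deriv G τ = m τ * M τ ^ n := by
    filter_upwards [hm.ae_hasDerivAt_integral_Iic] with τ hτ
    refine ((hτ.fun_pow (n + 1)).const_mul ((n : ℝ) + 1)⁻¹).deriv.trans ?_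
    rw [Nat.add_sub_cancel]
    push_cast
    field_simp
    exact mul_comm _ _
  have hFTC : ∀ a, ∫ τ in a..x, m τ * M τ ^ n = G x - G a := fun a => by
    rw [← (((hm.absolutelyContinuousOnInterval_integral_Iic a x).pow (n + 1)).const_mul
      ((n : ℝ) + 1)⁻¹).integral_deriv_eq_sub]
    exact intervalIntegral.integral_congr_ae (hG_deriv.mono fun τ hτ _ => hτ.symm)
  have hlim : Tendsto (fun a => G x - G a) atBot (𝓝 (G x - 0)) := by
    refine tendsto_const_nhds.sub ?_
    simpa [G] using ((tendsto_integral_Iic_zero tendsto_id).pow (n + 1)).const_mul ((n : ℝ) + 1)⁻¹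
  have := tendsto_nhds_unique (intervalIntegral_tendsto_integral_Iic x
    (hm.mul_pow_integral_Iic n).integrableOn tendsto_id) (hlim.congr fun a => (hFTC a).symm)
  simpa [G, div_eq_inv_mul] using this

end MeasureTheory.Integrable

attribute [local instance] Matrix.linftyOpNormedAddCommGroup Matrix.linftyOpNormedSpace
  Matrix.linftyOpNormedRing Matrix.linftyOpNormedAlgebra

theorem norm_volterra_iterate_le_pow_div_factorial {ι 𝕜 : Type*} [Fintype ι] [RCLike 𝕜]
    {m : ℝ → ℝ} (hm_int : Integrable m)
    {K : ℝ → ℝ → Matrix ι ι 𝕜} (hK_bound : ∀ x τ, τ ≤ x → ‖K x τ‖ ≤ m τ)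
    {v : ℕ → ℝ → ι → 𝕜} (hv0 : ∀ x, ‖v 0 x‖ ≤ 1)
    (hv : ∀ n x, v (n + 1) x = ∫ τ in Iic x, (K x τ).mulVec (v n τ)) (n : ℕ) (x : ℝ) :
    ‖v n x‖ ≤ (∫ τ in Iic x, m τ) ^ n / n.factorial := by
  induction n generalizing x with
  | zero => simpa using hv0 x
  | succ n ih =>
    have hbound : ∀ᵐ τ ∂volume.restrict (Iic x),
        ‖(K x τ).mulVec (v n τ)‖ ≤ m τ * (∫ t in Iic τ, m t) ^ n / n.factorial := by
      refine (ae_restrict_iff' measurableSet_Iic).2 (.of_forall fun τ hτ => ?_)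
      have hmτ : 0 ≤ m τ := (norm_nonneg _).trans (hK_bound x τ hτ)
      calc ‖(K x τ).mulVec (v n τ)‖ ≤ ‖K x τ‖ * ‖v n τ‖ := linfty_opNorm_mulVec _ _
        _ ≤ m τ * ((∫ t in Iic τ, m t) ^ n / n.factorial) :=
          mul_le_mul (hK_bound x τ hτ) (ih τ) (norm_nonneg _) hmτ
        _ = _ := (mul_div_assoc ..).symm
    calc ‖v (n + 1) x‖ ≤ ∫ τ in Iic x, m τ * (∫ t in Iic τ, m t) ^ n / n.factorial := by
          rw [hv]
          exact norm_integral_le_of_norm_le ((hm_int.mul_pow_integral_Iic n).div_const _).restrict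
            hbound
      _ = (∫ τ in Iic x, m τ) ^ (n + 1) / (n + 1).factorial := by
          rw [integral_div, hm_int.integral_Iic_mul_pow_integral_Iic, Nat.factorial_succ,
            Nat.cast_mul, div_div, Nat.cast_succ]

theorem norm_tsum_le_exp_of_norm_le_pow_div_factorial {α E : Type*} [NormedAddCommGroup E]
    [CompleteSpace E] {v : ℕ → α → E} {C : ℝ} (hv : ∀ n x, ‖v n x‖ ≤ C ^ n / n.factorial)
    (x : α) : ‖∑' n, v n x‖ ≤ Real.exp C := by
  have hsum := Real.summable_pow_div_factorial C
  have hsum_norm : Summable fun n => ‖v n x‖ :=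
    hsum.of_nonneg_of_le (fun _ => norm_nonneg _) (hv · x)
  calc ‖∑' n, v n x‖ ≤ ∑' n, ‖v n x‖ := norm_tsum_le_tsum_norm hsum_norm
    _ ≤ ∑' n : ℕ, C ^ n / n.factorial := hsum_norm.tsum_le_tsum (hv · x) hsum
    _ = Real.exp C := by rw [Real.exp_eq_exp_ℝ, NormedSpace.exp_eq_tsum_div]

theorem neumann_series_factorial_bound_general (m : ℝ → ℝ)
    (hm_nonneg : ∀ τ : ℝ, 0 ≤ m τ) (hm_int : Integrable m)
    (K : ℝ → ℝ → Matrix (Fin 2) (Fin 2) ℂ)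
    (hK_bound : ∀ x τ : ℝ, τ ≤ x → ‖K x τ‖ ≤ m τ)
    (v : ℕ → ℝ → Fin 2 → ℂ)
    (hv0 : ∀ x : ℝ, ‖v 0 x‖ ≤ 1)
    (hv : ∀ (n : ℕ) (x : ℝ), v (n + 1) x = ∫ τ in Set.Iic x, (K x τ).mulVec (v n τ)) :
    (∀ (n : ℕ) (x : ℝ), ‖v n x‖ ≤ (∫ τ in Set.Iic x, m τ) ^ n / n.factorial) ∧
    (∀ x : ℝ, Summable fun n : ℕ => ‖v n x‖) ∧
    TendstoUniformly (fun (N : ℕ) (x : ℝ) => ∑ n ∈ Finset.range N, v n x)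
      (fun x : ℝ => ∑' n : ℕ, v n x) Filter.atTop ∧
    ∀ x : ℝ, ‖∑' n : ℕ, v n x‖ ≤ Real.exp (∫ τ : ℝ, m τ) := by
  have hiter := norm_volterra_iterate_le_pow_div_factorial hm_int hK_bound hv0 hv
  have huniform : ∀ n x, ‖v n x‖ ≤ (∫ τ, m τ) ^ n / n.factorial := fun n x => by
    refine (hiter n x).trans
      (div_le_div_of_nonneg_right (pow_le_pow_left₀ ?_ ?_ n) n.factorial.cast_nonneg)
    · exact setIntegral_nonneg measurableSet_Iic fun τ _ => hm_nonneg τ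
    · exact setIntegral_le_integral hm_int (.of_forall hm_nonneg)
  have hsum := Real.summable_pow_div_factorial (∫ τ, m τ)
  exact ⟨hiter, fun x => hsum.of_nonneg_of_le (fun _ => norm_nonneg _) (huniform · x),
    tendstoUniformly_tsum_nat hsum huniform,
    norm_tsum_le_exp_of_norm_le_pow_div_factorial huniform⟩

/-- Picard/Neumann iteration bound: the iterates of the Volterra integral equation with
integrable kernel bound `m` satisfy the factorial bounds
`‖v n x‖ ≤ (∫_{-∞}^{x} m)ⁿ / n!`; consequently the Neumann series converges absolutely
and uniformly on `ℝ`, with sum bounded by `exp(∫ m)`. -/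
theorem neumann_series_factorial_bound (m : ℝ → ℝ)
    (hm_nonneg : ∀ τ : ℝ, 0 ≤ m τ) (hm_int : Integrable m)
    (K : ℝ → ℝ → Matrix (Fin 2) (Fin 2) ℂ)
    (hK_meas : ∀ i j : Fin 2, Measurable fun p : ℝ × ℝ => K p.1 p.2 i j)
    (hK_bound : ∀ x τ : ℝ, τ ≤ x → ‖K x τ‖ ≤ m τ)
    (v : ℕ → ℝ → Fin 2 → ℂ)
    (hv0 : ∀ x : ℝ, ‖v 0 x‖ ≤ 1)
    (hv : ∀ (n : ℕ) (x : ℝ), v (n + 1) x = ∫ τ in Set.Iic x, (K x τ).mulVec (v n τ)) :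
    (∀ (n : ℕ) (x : ℝ), ‖v n x‖ ≤ (∫ τ in Set.Iic x, m τ) ^ n / n.factorial) ∧
    (∀ x : ℝ, Summable fun n : ℕ => ‖v n x‖) ∧
    TendstoUniformly (fun (N : ℕ) (x : ℝ) => ∑ n ∈ Finset.range N, v n x)
      (fun x : ℝ => ∑' n : ℕ, v n x) Filter.atTop ∧
    ∀ x : ℝ, ‖∑' n : ℕ, v n x‖ ≤ Real.exp (∫ τ : ℝ, m τ) :=
  neumann_series_factorial_bound_general m hm_nonneg hm_int K hK_bound v hv0 hv
end

section
/- Let U, V : ℝ × ℝ → Matrix (Fin 2) (Fin 2) ℂ be continuously differentiable and satisfy the zero-curvature equation ∂ₜU − ∂ₓV + U*V − V*U = 0 everywhere. Let F : ℝ × ℝ → Matrix (Fin 2) (Fin 2) ℂ be twice continuously differentiable with ∂ₓF(x,t) = U(x,t) * F(x,t) for all (x,t). Then the matrix function W := ∂ₜF − V*F satisfies the same x-equation: ∂ₓW(x,t) = U(x,t) * W(x,t) for all (x,t). -/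
/-! By Schwarz's theorem ∂ₓ∂ₜF = ∂ₜ∂ₓF = ∂ₜ(UF) = UₜF + U∂ₜF, and ∂ₓ(VF) = VₓF + VUF;
the zero-curvature equation Uₜ - Vₓ = VU - UV turns the difference of the two into U(∂ₜF - VF). -/

open Matrix

section PartialDerivatives

variable {E : Type*} [NormedAddCommGroup E] [NormedSpace ℝ E]

theorem HasFDerivAt.hasDerivAt_fst_slice {f : ℝ × ℝ → E} {f' : ℝ × ℝ →L[ℝ] E} {x t : ℝ}
    (hf : HasFDerivAt f f' (x, t)) : HasDerivAt (fun s => f (s, t)) (f' (1, 0)) x :=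
  hf.comp_hasDerivAt x ((hasDerivAt_id x).prodMk (hasDerivAt_const x t))

theorem HasFDerivAt.hasDerivAt_snd_slice {f : ℝ × ℝ → E} {f' : ℝ × ℝ →L[ℝ] E} {x t : ℝ}
    (hf : HasFDerivAt f f' (x, t)) : HasDerivAt (fun s => f (x, s)) (f' (0, 1)) t :=
  hf.comp_hasDerivAt t ((hasDerivAt_const t x).prodMk (hasDerivAt_id t))

theorem hasDerivAt_partial_comm {f fx ft : ℝ × ℝ → E} (hf : ContDiff ℝ 2 f)
    (hfx : ∀ x t, HasDerivAt (fun s => f (s, t)) (fx (x, t)) x)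
    (hft : ∀ x t, HasDerivAt (fun s => f (x, s)) (ft (x, t)) t) {x t : ℝ} {g : E}
    (hg : HasDerivAt (fun s => fx (x, s)) g t) : HasDerivAt (fun s => ft (s, t)) g x := by
  have hdf : ∀ q, HasFDerivAt f (fderiv ℝ f q) q := fun q =>
    (hf.differentiable two_ne_zero q).hasFDerivAt
  have hdf' : HasFDerivAt (fderiv ℝ f) (fderiv ℝ (fderiv ℝ f) (x, t)) (x, t) :=
    ((hf.fderiv_right le_rfl).differentiable one_ne_zero _).hasFDerivAt
  have hfx_eq : ∀ q, fx q = fderiv ℝ f q (1, 0) := fun q =>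
    (hfx q.1 q.2).unique (hdf q).hasDerivAt_fst_slice
  have hft_eq : ∀ q, ft q = fderiv ℝ f q (0, 1) := fun q =>
    (hft q.1 q.2).unique (hdf q).hasDerivAt_snd_slice
  have htx : HasDerivAt (fun s => fx (x, s)) (fderiv ℝ (fderiv ℝ f) (x, t) (0, 1) (1, 0)) t := by
    simp only [hfx_eq]
    simpa using hdf'.hasDerivAt_snd_slice.clm_apply (hasDerivAt_const t ((1 : ℝ), (0 : ℝ)))
  have hxt : HasDerivAt (fun s => ft (s, t)) (fderiv ℝ (fderiv ℝ f) (x, t) (1, 0) (0, 1)) x := by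
    simp only [hft_eq]
    simpa using hdf'.hasDerivAt_fst_slice.clm_apply (hasDerivAt_const x ((0 : ℝ), (1 : ℝ)))
  rwa [(hf.contDiffAt.isSymmSndFDerivAt (by simp)).eq, htx.unique hg] at hxt

end PartialDerivatives

namespace Matrix

variable {𝕜 R : Type*} [NontriviallyNormedField 𝕜] [NormedRing R] [NormedAlgebra 𝕜 R]
  {l m n : Type*} [Fintype m]

def HasEntrywiseDerivAt (A : 𝕜 → Matrix l n R) (A' : Matrix l n R) (x : 𝕜) : Prop :=
  ∀ i j, HasDerivAt (fun s => A s i j) (A' i j) x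

theorem HasEntrywiseDerivAt.sub {A B : 𝕜 → Matrix l n R} {A' B' : Matrix l n R} {x : 𝕜}
    (hA : HasEntrywiseDerivAt A A' x) (hB : HasEntrywiseDerivAt B B' x) :
    HasEntrywiseDerivAt (fun s => A s - B s) (A' - B') x :=
  fun i j => (hA i j).sub (hB i j)

theorem HasEntrywiseDerivAt.mul {A : 𝕜 → Matrix l m R} {B : 𝕜 → Matrix m n R}
    {A' : Matrix l m R} {B' : Matrix m n R} {x : 𝕜}
    (hA : HasEntrywiseDerivAt A A' x) (hB : HasEntrywiseDerivAt B B' x) :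
    HasEntrywiseDerivAt (fun s => A s * B s) (A' * B x + A x * B') x := by
  intro i j
  simp only [add_apply, mul_apply, ← Finset.sum_add_distrib]
  exact HasDerivAt.fun_sum fun k _ => (hA i k).mul (hB k j)

end Matrix

theorem mul_add_mul_sub_of_zero_curvature {R : Type*} [Ring R] {u v ut vx f ft : R}
    (h : ut - vx + (u * v - v * u) = 0) :
    ut * f + u * ft - (vx * f + v * (u * f)) = u * (ft - v * f) := by
  obtain rfl : ut = vx - (u * v - v * u) := by rw [← sub_eq_zero, ← h]; abel
  noncomm_ring

theorem dressed_jost_solves_x_equation_general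
    (U V F Ut Vx Ft : ℝ × ℝ → Matrix (Fin 2) (Fin 2) ℂ)
    (hF : ∀ i j : Fin 2, ContDiff ℝ 2 fun p : ℝ × ℝ => F p i j)
    (hUt : ∀ (x t : ℝ) (i j : Fin 2),
      HasDerivAt (fun s => U (x, s) i j) (Ut (x, t) i j) t)
    (hVx : ∀ (x t : ℝ) (i j : Fin 2),
      HasDerivAt (fun s => V (s, t) i j) (Vx (x, t) i j) x)
    (hzc : ∀ p : ℝ × ℝ, Ut p - Vx p + (U p * V p - V p * U p) = 0)
    (hFx : ∀ (x t : ℝ) (i j : Fin 2),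
      HasDerivAt (fun s => F (s, t) i j) ((U (x, t) * F (x, t)) i j) x)
    (hFt : ∀ (x t : ℝ) (i j : Fin 2),
      HasDerivAt (fun s => F (x, s) i j) (Ft (x, t) i j) t)
    (W : ℝ × ℝ → Matrix (Fin 2) (Fin 2) ℂ)
    (hW : ∀ p : ℝ × ℝ, W p = Ft p - V p * F p) :
    ∀ (x t : ℝ) (i j : Fin 2),
      HasDerivAt (fun s => W (s, t) i j) ((U (x, t) * W (x, t)) i j) x := by
  intro x t
  have hUFt : HasEntrywiseDerivAt (fun s => U (x, s) * F (x, s))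
      (Ut (x, t) * F (x, t) + U (x, t) * Ft (x, t)) t :=
    HasEntrywiseDerivAt.mul (hUt x t) (hFt x t)
  have hFtx : HasEntrywiseDerivAt (fun s => Ft (s, t))
      (Ut (x, t) * F (x, t) + U (x, t) * Ft (x, t)) x := fun i j =>
    hasDerivAt_partial_comm (fx := fun q => (U q * F q) i j) (ft := fun q => Ft q i j) (hF i j)
      (fun x t => hFx x t i j) (fun x t => hFt x t i j) (hUFt i j)
  have hWx := hFtx.sub (HasEntrywiseDerivAt.mul (hVx x t) (hFx x t))
  rwa [mul_add_mul_sub_of_zero_curvature (hzc (x, t)), ← hW,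
    funext fun s => (hW (s, t)).symm] at hWx

/-- If the zero-curvature equation holds and `F` solves the `x`-equation `∂ₓF = UF`,
then `W := ∂ₜF - V·F` also solves the `x`-equation `∂ₓW = UW`. -/
theorem dressed_jost_solves_x_equation
    (U V F Ut Vx Ft : ℝ × ℝ → Matrix (Fin 2) (Fin 2) ℂ)
    (hU : ∀ i j : Fin 2, ContDiff ℝ 1 fun p : ℝ × ℝ => U p i j)
    (hV : ∀ i j : Fin 2, ContDiff ℝ 1 fun p : ℝ × ℝ => V p i j)
    (hF : ∀ i j : Fin 2, ContDiff ℝ 2 fun p : ℝ × ℝ => F p i j)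
    (hUt : ∀ (x t : ℝ) (i j : Fin 2),
      HasDerivAt (fun s => U (x, s) i j) (Ut (x, t) i j) t)
    (hVx : ∀ (x t : ℝ) (i j : Fin 2),
      HasDerivAt (fun s => V (s, t) i j) (Vx (x, t) i j) x)
    (hzc : ∀ p : ℝ × ℝ, Ut p - Vx p + (U p * V p - V p * U p) = 0)
    (hFx : ∀ (x t : ℝ) (i j : Fin 2),
      HasDerivAt (fun s => F (s, t) i j) ((U (x, t) * F (x, t)) i j) x)
    (hFt : ∀ (x t : ℝ) (i j : Fin 2),
      HasDerivAt (fun s => F (x, s) i j) (Ft (x, t) i j) t)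
    (W : ℝ × ℝ → Matrix (Fin 2) (Fin 2) ℂ)
    (hW : ∀ p : ℝ × ℝ, W p = Ft p - V p * F p) :
    ∀ (x t : ℝ) (i j : Fin 2),
      HasDerivAt (fun s => W (s, t) i j) ((U (x, t) * W (x, t)) i j) x :=
  dressed_jost_solves_x_equation_general U V F Ut Vx Ft hF hUt hVx hzc hFx hFt W hW
end

section
/- Let Ψ ∈ Matrix (Fin 2) (Fin 2) ℂ be invertible and suppose σ₂ * (entrywise complex conjugate of Ψ) * σ₂ = ε·Ψ, where ε = 1 or ε = −1. If (c₁, c₂, c₃) ∈ ℂ³ satisfies Ψ * σ₃ * Ψ⁻¹ = c₁·σ₁ + c₂·σ₂ + c₃·σ₃, then c₁, c₂, c₃ are all real. -/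
open Matrix

noncomputable def σ₁ : Matrix (Fin 2) (Fin 2) ℂ := !![0, 1; 1, 0]
noncomputable def σ₂ : Matrix (Fin 2) (Fin 2) ℂ := !![0, -Complex.I; Complex.I, 0]
/-- Reality of the Pauli coefficients: if `Ψ` is invertible and satisfies the symmetry
`σ₂ conj(Ψ) σ₂ = ±Ψ`, then any Pauli expansion `Ψ σ₃ Ψ⁻¹ = c₁σ₁ + c₂σ₂ + c₃σ₃`
has real coefficients. -/
theorem pauli_coefficients_real (Ψ : Matrix (Fin 2) (Fin 2) ℂ) (hΨ : IsUnit Ψ.det)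
    (ε : ℂ) (hε : ε = 1 ∨ ε = -1)
    (hsymm : σ₂ * Ψ.map (starRingEnd ℂ) * σ₂ = ε • Ψ)
    (c₁ c₂ c₃ : ℂ) (hc : Ψ * σ₃ * Ψ⁻¹ = c₁ • σ₁ + c₂ • σ₂ + c₃ • σ₃) :
    c₁.im = 0 ∧ c₂.im = 0 ∧ c₃.im = 0 := by
  have h1 : Ψ * σ₃ = (c₁ • σ₁ + c₂ • σ₂ + c₃ • σ₃) * Ψ := by
    calc Ψ * σ₃ = Ψ * σ₃ * Ψ⁻¹ * Ψ := by rw [Matrix.nonsing_inv_mul_cancel_right _ _ hΨ]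
    _ = _ := by rw [hc]
  have hε2 : ε * ε = 1 := by rcases hε with h | h <;> subst h <;> norm_num
  have hεc : (starRingEnd ℂ) ε = ε := by rcases hε with h | h <;> subst h <;> simp
  have e1 := Matrix.ext_iff.mpr h1 0 0
  have e2 := Matrix.ext_iff.mpr h1 0 1
  have e3 := Matrix.ext_iff.mpr h1 1 0
  have e4 := Matrix.ext_iff.mpr h1 1 1
  have s1 := Matrix.ext_iff.mpr hsymm 0 0
  have s2 := Matrix.ext_iff.mpr hsymm 0 1
  have s3 := Matrix.ext_iff.mpr hsymm 1 0
  have s4 := Matrix.ext_iff.mpr hsymm 1 1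
  simp only [σ₁, σ₂, σ₃, Matrix.mul_apply, Fin.sum_univ_two, Matrix.add_apply,
    Matrix.smul_apply, Matrix.map_apply, Matrix.cons_val', Matrix.cons_val_zero,
    Matrix.cons_val_one, Matrix.head_cons, Matrix.head_fin_const, Matrix.empty_val',
    Matrix.cons_val_fin_one, Matrix.of_apply, smul_eq_mul] at e1 e2 e3 e4 s1 s2 s3 s4
  set a := Ψ 0 0 with ha; set b := Ψ 0 1 with hb; set c := Ψ 1 0 with hcc; set d := Ψ 1 1 with hd
  -- symmetry relations for conjugated entries
  have S1 : (starRingEnd ℂ) d = ε * a := by linear_combination s1 + (starRingEnd ℂ) d * Complex.I_sq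
  have S2 : (starRingEnd ℂ) c = -(ε * b) := by linear_combination -s2 + (starRingEnd ℂ) c * Complex.I_sq
  have S3 : (starRingEnd ℂ) b = -(ε * c) := by linear_combination -s3 + (starRingEnd ℂ) b * Complex.I_sq
  have S4 : (starRingEnd ℂ) a = ε * d := by linear_combination s4 + (starRingEnd ℂ) a * Complex.I_sq
  -- conjugated evolution equations
  have f1 := congrArg (starRingEnd ℂ) e1
  have f2 := congrArg (starRingEnd ℂ) e2
  have f3 := congrArg (starRingEnd ℂ) e3
  have f4 := congrArg (starRingEnd ℂ) e4
  simp only [map_add, _root_.map_mul, map_neg, _root_.map_one, _root_.map_zero, Complex.conj_I] at f1 f2 f3 f4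
  simp only [S1, S2, S3, S4] at f1 f2 f3 f4
  -- determinant nonzero
  have hdet : a * d - b * c ≠ 0 := by
    rw [isUnit_iff_ne_zero, Matrix.det_fin_two] at hΨ
    exact hΨ
  set D1 := c₁ - (starRingEnd ℂ) c₁ with hD1
  set D2 := c₂ - (starRingEnd ℂ) c₂ with hD2
  set D3 := c₃ - (starRingEnd ℂ) c₃ with hD3
  have hA : D3 * a + (D1 - D2 * Complex.I) * c = 0 := by
    linear_combination (-1 : ℂ) * e1 - ε * f4 + (-a + ((starRingEnd ℂ) c₁ - (starRingEnd ℂ) c₂ * Complex.I) * c + (starRingEnd ℂ) c₃ * a) * hε2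
  have hB : D3 * b + (D1 - D2 * Complex.I) * d = 0 := by
    linear_combination (-1 : ℂ) * e2 + ε * f3 + (b + ((starRingEnd ℂ) c₁ - (starRingEnd ℂ) c₂ * Complex.I) * d + (starRingEnd ℂ) c₃ * b) * hε2
  have hC : (D1 + D2 * Complex.I) * a - D3 * c = 0 := by
    linear_combination (-1 : ℂ) * e3 + ε * f2 + (-c + ((starRingEnd ℂ) c₁ + (starRingEnd ℂ) c₂ * Complex.I) * a - (starRingEnd ℂ) c₃ * c) * hε2
  have hD : (D1 + D2 * Complex.I) * b - D3 * d = 0 := by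
    linear_combination (-1 : ℂ) * e4 - ε * f1 + (d + ((starRingEnd ℂ) c₁ + (starRingEnd ℂ) c₂ * Complex.I) * b - (starRingEnd ℂ) c₃ * d) * hε2
  have h3 : D3 = 0 := by
    have h : D3 * (a * d - b * c) = 0 := by linear_combination d * hA - c * hB
    exact (mul_eq_zero.mp h).resolve_right hdet
  have hQ : D1 + D2 * Complex.I = 0 := by
    by_contra hne
    have ha0 : a = 0 := by
      have : (D1 + D2 * Complex.I) * a = 0 := by linear_combination hC + c * h3
      exact (mul_eq_zero.mp this).resolve_left hne
    have hb0 : b = 0 := by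
      have : (D1 + D2 * Complex.I) * b = 0 := by linear_combination hD + d * h3
      exact (mul_eq_zero.mp this).resolve_left hne
    exact hdet (by rw [ha0, hb0]; ring)
  have hP : D1 - D2 * Complex.I = 0 := by
    by_contra hne
    have hc0 : c = 0 := by
      have : (D1 - D2 * Complex.I) * c = 0 := by linear_combination hA - a * h3
      exact (mul_eq_zero.mp this).resolve_left hne
    have hd0 : d = 0 := by
      have : (D1 - D2 * Complex.I) * d = 0 := by linear_combination hB - b * h3
      exact (mul_eq_zero.mp this).resolve_left hne
    exact hdet (by rw [hc0, hd0]; ring)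
  have h1' : D1 = 0 := by linear_combination (hP + hQ) / 2
  have h2' : D2 = 0 := by
    have : D2 * Complex.I = 0 := by linear_combination (hQ - hP) / 2
    exact (mul_eq_zero.mp this).resolve_right Complex.I_ne_zero
  refine ⟨?_, ?_, ?_⟩
  · have := sub_eq_zero.mp h1'
    simpa [Complex.conj_eq_iff_im] using this.symm
  · have := sub_eq_zero.mp h2'
    simpa [Complex.conj_eq_iff_im] using this.symm
  · have := sub_eq_zero.mp h3
    simpa [Complex.conj_eq_iff_im] using this.symm
end
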